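/- Let G10' be the interlacement graph of the matching { {0,5}, {1,10}, {2,15}, {3,16}, {4,9}, {6,13}, {7,14}, {8,19}, {11,18}, {12,17} } of {0,...,19}, with vertex set {0,...,9} where vertex i corresponds to the i-th chord in the listed order and vertices i, j are adjacent if and only if the corresponding chords are interlaced. Then G10' is connected, every vertex of G10' has even degree, G10' satisfies conditions C2 and B3, and yet G10' fails the STZ condition (there is no diagonal matrix Λ over GF(2) such that M + Λ is idempotent, where M is the adjacency matrix of G10' over GF(2)). -/

import Mathlib

/-- Two sorted pairs (chords) are interlaced. -/
def Interlaced (p q : ℕ × ℕ) : Prop :=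
  (p.1 < q.1 ∧ q.1 < p.2 ∧ p.2 < q.2) ∨ (q.1 < p.1 ∧ p.1 < q.2 ∧ q.2 < p.2)

/-- Interlacement graph of a tuple of chords: vertex `i` corresponds to the `i`-th chord,
and two vertices are adjacent iff the corresponding chords are interlaced. -/
def interGraph {n : ℕ} (c : Fin n → ℕ × ℕ) : SimpleGraph (Fin n) where
  Adj i j := i ≠ j ∧ Interlaced (c i) (c j)
  symm := ⟨fun _ _ h => ⟨h.1.symm, Or.symm h.2⟩⟩
  loopless := ⟨fun _ h => h.1 rfl⟩

/-- Condition C1: every vertex has even degree. -/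
def CondC1 {V : Type*} (G : SimpleGraph V) : Prop :=
  ∀ v : V, Even (G.neighborSet v).ncard

/-- Condition C2: each pair of distinct non-adjacent vertices has an even number
(possibly zero) of common neighbours. -/
def CondC2 {V : Type*} (G : SimpleGraph V) : Prop :=
  ∀ u v : V, u ≠ v → ¬ G.Adj u v → Even {w | G.Adj u w ∧ G.Adj v w}.ncard

/-- Condition B3 (Biryukov): for any three pairwise adjacent vertices `a`, `b`, `c`,
the number of vertices `w ∉ {b, c}` adjacent to `a` but to neither `b` nor `c`, plus
the number of vertices `w ≠ a` adjacent to both `b` and `c` but not to `a`, is even. -/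
def CondB3 {V : Type*} (G : SimpleGraph V) : Prop :=
  ∀ a b c : V, G.Adj a b → G.Adj a c → G.Adj b c →
    Even ({w | w ≠ b ∧ w ≠ c ∧ G.Adj a w ∧ ¬ G.Adj b w ∧ ¬ G.Adj c w}.ncard +
          {w | w ≠ a ∧ ¬ G.Adj a w ∧ G.Adj b w ∧ G.Adj c w}.ncard)

open Classical in
/-- Adjacency matrix of a simple graph over `GF(2) = ZMod 2`. -/
noncomputable def adjMat2 {V : Type*} (G : SimpleGraph V) : Matrix V V (ZMod 2) :=
  Matrix.of fun i j => if G.Adj i j then 1 else 0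

/-- The Shtylla–Traldi–Zulli condition: there is a diagonal matrix `Λ` over `GF(2)`
such that `M + Λ` is idempotent, where `M` is the adjacency matrix over `GF(2)`. -/
def CondSTZ {V : Type*} [Fintype V] [DecidableEq V] (G : SimpleGraph V) : Prop :=
  ∃ d : V → ZMod 2,
    (adjMat2 G + Matrix.diagonal d) * (adjMat2 G + Matrix.diagonal d)
      = adjMat2 G + Matrix.diagonal d

/-- The chords of the matching `{{0,5},{1,10},{2,15},{3,16},{4,9},{6,13},{7,14},{8,19},{11,18},{12,17}}`
of `{0, ..., 19}`, in the listed order. -/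
def L10chords' : Fin 10 → ℕ × ℕ :=
  ![(0, 5), (1, 10), (2, 15), (3, 16), (4, 9), (6, 13), (7, 14), (8, 19), (11, 18), (12, 17)]

/-- The interlacement graph of that matching. -/
def G10' : SimpleGraph (Fin 10) := interGraph L10chords'

/-! If `M + diagonal d` is idempotent, comparing its `(v, w)` entry with that of its square at an
edge `vw` gives `d v + d w = 1 + #(N v ∩ N w)` over `GF(2)`. Summed around a closed walk the left
sides cancel, but around the 4-cycle `1 – 5 – 8 – 2` of `G10'` the right sides add up to `1`.
Connectivity and the parity conditions C1, C2, B3 are finite checks. -/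

instance (p q : ℕ × ℕ) : Decidable (Interlaced p q) := by
  unfold Interlaced; infer_instance

instance : DecidableRel G10'.Adj := fun i j =>
  inferInstanceAs (Decidable (i ≠ j ∧ Interlaced (L10chords' i) (L10chords' j)))

open Finset Matrix

namespace SimpleGraph

variable {V : Type*} (G : SimpleGraph V)

theorem adjMat2_eq_adjMatrix [DecidableRel G.Adj] : adjMat2 G = G.adjMatrix (ZMod 2) := by
  ext i j
  simp only [adjMat2, of_apply, adjMatrix_apply]
  congr

variable [Fintype V] [DecidableRel G.Adj]

theorem adjMat2_mul_self_apply (v w : V) :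
    (adjMat2 G * adjMat2 G) v w = #{u | G.Adj v u ∧ G.Adj w u} := by
  simp only [adjMat2_eq_adjMatrix, adjMatrix_mul_apply, adjMatrix_apply, sum_boole]
  congr 2
  ext u
  simp [adj_comm]

def edgeParity (v w : V) : ZMod 2 := 1 + #{u | G.Adj v u ∧ G.Adj w u}

variable {G} [DecidableEq V] {d : V → ZMod 2}

theorem add_eq_edgeParity_of_isIdempotentElem (hd : IsIdempotentElem (adjMat2 G + diagonal d))
    {v w : V} (h : G.Adj v w) : d v + d w = G.edgeParity v w := by
  have hvw := congrFun (congrFun hd v) w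
  simp only [add_mul, mul_add, diagonal_mul_diagonal, Matrix.add_apply, mul_diagonal, diagonal_mul,
    diagonal_apply_ne _ h.ne, adjMat2_mul_self_apply] at hvw
  simp only [adjMat2, of_apply, if_pos h] at hvw
  rw [edgeParity]
  linear_combination
    hvw - (#{u | G.Adj v u ∧ G.Adj w u} : ZMod 2) * CharTwo.two_eq_zero (R := ZMod 2)

theorem sum_darts_edgeParity_of_isIdempotentElem (hd : IsIdempotentElem (adjMat2 G + diagonal d)) :
    ∀ {u v : V} (p : G.Walk u v), (p.darts.map fun e => G.edgeParity e.fst e.snd).sum = d u + d v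
  | _, _, .nil => by simp [CharTwo.add_self_eq_zero]
  | _, _, .cons (v := w) h p => by
    rw [Walk.darts_cons, List.map_cons, List.sum_cons,
      sum_darts_edgeParity_of_isIdempotentElem hd p, ← add_eq_edgeParity_of_isIdempotentElem hd h]
    linear_combination d w * CharTwo.two_eq_zero (R := ZMod 2)

theorem not_condSTZ_of_closed_walk {u : V} (p : G.Walk u u)
    (hp : (p.darts.map fun e => G.edgeParity e.fst e.snd).sum ≠ 0) : ¬ CondSTZ G := by
  rintro ⟨d, hd⟩
  rw [sum_darts_edgeParity_of_isIdempotentElem hd p, CharTwo.add_self_eq_zero] at hp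
  exact hp rfl

end SimpleGraph

/-- `G10'` is connected, has all degrees even, satisfies C2 and B3, but fails the STZ
condition. -/
theorem G10'_counterexample :
    G10'.Connected ∧ CondC1 G10' ∧ CondC2 G10' ∧ CondB3 G10' ∧ ¬ CondSTZ G10' := by
  refine ⟨by decide, ?_, ?_, ?_, SimpleGraph.not_condSTZ_of_closed_walk
    (.cons (by decide : G10'.Adj 1 5) <| .cons (by decide : G10'.Adj 5 8) <|
      .cons (by decide : G10'.Adj 8 2) <| .cons (by decide : G10'.Adj 2 1) .nil) (by decide)⟩
  all_goals
    simp only [CondC1, CondC2, CondB3, SimpleGraph.neighborSet, Set.ncard_eq_toFinset_card',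
      Set.toFinset_ofPred]
    decide
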